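/- The α-dual of ℓ_p(F̂(r,s)) for 1 < p < ∞ is the set of sequences a such that sup over finite subsets K of ℕ of ∑_k | ∑_{n∈K} b_{nk} |^q is finite, where q = p/(p−1) and b_{nk} = (1/r)(−s/r)^{n−k} f_{n+1}²/(f_k f_{k+1}) a_n for 0 ≤ k ≤ n and 0 otherwise. Equivalently: (a_n x_n) ∈ ℓ_1 for all x ∈ ℓ_p(F̂(r,s)) iff this condition holds. -/

import Mathlib

/-!
`Fhat r s` is a bijection of `ℕ → ℝ` whose inverse is the lower-triangular matrix `fhatInv r s`
(for `r ≠ 0`), so `x ↦ Fhat r s x` identifies `ℓ_p(F̂)` with `ℓ_p`, and the condition becomes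
`(a_n (C y)_n) ∈ ℓ_1` for every `y ∈ ℓ_p`, with `C = fhatInv r s`. Exchanging the order of
summation, `∑_{n ∈ K} a_n (C y)_n` is the pairing of `y` with the column sums
`∑_{n ∈ K} b_{nk}`. Hölder's inequality shows that a uniform `ℓ_q` bound on these column sums
suffices. Conversely, they define functionals on `ℓ_p` that are pointwise bounded, hence
uniformly bounded by Banach–Steinhaus, and the norm of such a functional dominates the
`ℓ_q` norm of its coefficients.
-/

open scoped BigOperators
open Filter

noncomputable def fibs (n : ℕ) : ℝ := (Nat.fib (n + 1) : ℝ)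

noncomputable def Fhat (r s : ℝ) (x : ℕ → ℝ) : ℕ → ℝ
  | 0 => r * x 0
  | n + 1 => r * (fibs (n + 1) / fibs (n + 2)) * x (n + 1)
      + s * (fibs (n + 2) / fibs (n + 1)) * x n

open scoped ENNReal

theorem summable_abs_of_abs_sum_le {ι : Type*} {u : ι → ℝ} {M : ℝ}
    (h : ∀ K : Finset ι, |∑ n ∈ K, u n| ≤ M) : Summable fun n => |u n| := by
  classical
  refine summable_of_sum_le (fun n => abs_nonneg _) (c := M + M) fun K => ?_
  have hpos : ∑ n ∈ K with 0 ≤ u n, |u n| ≤ M := by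
    rw [Finset.sum_congr rfl fun n hn => abs_of_nonneg (Finset.mem_filter.1 hn).2]
    exact (le_abs_self _).trans (h _)
  have hneg : ∑ n ∈ K with ¬0 ≤ u n, |u n| ≤ M := by
    rw [Finset.sum_congr rfl fun n hn => abs_of_neg (not_le.1 (Finset.mem_filter.1 hn).2),
      Finset.sum_neg_distrib]
    exact (neg_le_abs _).trans (h _)
  rw [← Finset.sum_filter_add_sum_filter_not K (fun n => 0 ≤ u n)]
  exact add_le_add hpos hneg

theorem abs_sum_mul_le_Lp_mul_Lq {ι : Type*} (s : Finset ι) (f g : ι → ℝ) {p q : ℝ}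
    (hpq : p.HolderConjugate q) :
    |∑ i ∈ s, f i * g i| ≤ (∑ i ∈ s, |f i| ^ p) ^ (1 / p) * (∑ i ∈ s, |g i| ^ q) ^ (1 / q) := by
  calc |∑ i ∈ s, f i * g i| ≤ ∑ i ∈ s, |f i| * |g i| := by
        simpa only [abs_mul] using Finset.abs_sum_le_sum_abs (fun i => f i * g i) s
    _ ≤ _ := by
        simpa only [abs_abs] using Real.inner_le_Lp_mul_Lq s (fun i => |f i|) (fun i => |g i|) hpq

-- The equality case of Hölder's inequality, attained at `y = sign d * |d| ^ (q - 1)`.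
theorem exists_lp_norm_rpow_eq_and_sum_mul_eq {α : Type*} {p : ℝ≥0∞} {q : ℝ}
    (hpq : p.toReal.HolderConjugate q) (J : Finset α) (d : α → ℝ) :
    ∃ y : lp (fun _ : α => ℝ) p, ‖y‖ ^ p.toReal = ∑ k ∈ J, |d k| ^ q ∧
      ∑ k ∈ J, d k * y k = ∑ k ∈ J, |d k| ^ q := by
  classical
  have hp := hpq.pos
  have hq := hpq.symm.pos
  set e : α → ℝ := fun k => SignType.sign (d k) * |d k| ^ (q - 1)
  have he_mul (k : α) : d k * e k = |d k| ^ q := by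
    rcases eq_or_ne (d k) 0 with h | h
    · simp [e, h, Real.zero_rpow hq.ne']
    · rw [← mul_assoc, self_mul_sign, ← Real.rpow_one_add' (abs_nonneg _) (by linarith),
        add_sub_cancel]
  have he_pow (k : α) : |e k| ^ p.toReal = |d k| ^ q := by
    rcases eq_or_ne (d k) 0 with h | h
    · simp [e, h, Real.zero_rpow hq.ne', Real.zero_rpow hp.ne']
    · have hsign : |(SignType.sign (d k) : ℝ)| = 1 := by
        rcases h.lt_or_gt with h | h <;> simp [sign_neg, sign_pos, h]
      rw [abs_mul, hsign, one_mul, abs_of_nonneg (by positivity),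
        ← Real.rpow_mul (abs_nonneg _), hpq.symm.sub_one_mul_conj]
  refine ⟨∑ k ∈ J, lp.single p k (e k), ?_, Finset.sum_congr rfl fun k hk => ?_⟩
  · simpa only [Real.norm_eq_abs, he_pow] using lp.norm_sum_single hp e J
  · simp only [lp.coeFn_sum, lp.coeFn_single]
    rw [Finset.sum_apply, Finset.sum_pi_single, if_pos hk, he_mul]

theorem sum_abs_rpow_le_opNorm_rpow {α : Type*} {p : ℝ≥0∞} [Fact (1 ≤ p)] {q : ℝ}
    (hpq : p.toReal.HolderConjugate q) (J : Finset α) (d : α → ℝ)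
    (φ : lp (fun _ : α => ℝ) p →L[ℝ] ℝ) (hφ : ∀ y, φ y = ∑ k ∈ J, d k * y k) :
    ∑ k ∈ J, |d k| ^ q ≤ ‖φ‖ ^ q := by
  have hp := hpq.pos
  have hq := hpq.symm.pos
  obtain ⟨y, hy_pow, hφy⟩ := exists_lp_norm_rpow_eq_and_sum_mul_eq hpq J d
  set S := ∑ k ∈ J, |d k| ^ q
  rw [← hφ] at hφy
  have hy_norm : ‖y‖ = S ^ (1 / p.toReal) := by
    rw [← hy_pow, ← Real.rpow_mul (norm_nonneg _), mul_one_div_cancel hp.ne', Real.rpow_one]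
  have hS : 0 ≤ S := Finset.sum_nonneg fun k _ => by positivity
  rcases hS.eq_or_lt with hS0 | hSpos
  · rw [← hS0]; positivity
  have hS_le : S ^ (1 / q) * S ^ (1 / p.toReal) ≤ ‖φ‖ * S ^ (1 / p.toReal) := by
    calc S ^ (1 / q) * S ^ (1 / p.toReal) = φ y := by
          rw [hφy, ← Real.rpow_add hSpos, one_div, one_div, add_comm, hpq.inv_add_inv_eq_one,
            Real.rpow_one]
      _ ≤ ‖φ‖ * ‖y‖ := (le_abs_self _).trans (φ.le_opNorm y)
      _ = ‖φ‖ * S ^ (1 / p.toReal) := by rw [hy_norm]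
  calc S = (S ^ (1 / q)) ^ q := by rw [← Real.rpow_mul hS, one_div_mul_cancel hq.ne', Real.rpow_one]
    _ ≤ ‖φ‖ ^ q := by gcongr; exact le_of_mul_le_mul_right hS_le (by positivity)

section Triangle

def triangleApply (c : ℕ → ℕ → ℝ) (y : ℕ → ℝ) (n : ℕ) : ℝ :=
  ∑ k ∈ Finset.range (n + 1), c n k * y k

def dualMatrix (c : ℕ → ℕ → ℝ) (a : ℕ → ℝ) (n k : ℕ) : ℝ :=
  if k ≤ n then c n k * a n else 0

variable {c : ℕ → ℕ → ℝ} {a : ℕ → ℝ}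

theorem sum_dualMatrix_eq_zero {K : Finset ℕ} {k : ℕ} (hk : K.sup id < k) :
    ∑ n ∈ K, dualMatrix c a n k = 0 :=
  Finset.sum_eq_zero fun _ hn =>
    if_neg fun hkn => not_le.2 hk (hkn.trans (Finset.le_sup (f := id) hn))

theorem sum_mul_triangleApply (y : ℕ → ℝ) (K : Finset ℕ) :
    ∑ n ∈ K, a n * triangleApply c y n =
      ∑ k ∈ Finset.range (K.sup id + 1), (∑ n ∈ K, dualMatrix c a n k) * y k := by
  simp_rw [Finset.sum_mul]
  rw [Finset.sum_comm]
  refine Finset.sum_congr rfl fun n hn => ?_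
  have hn : n ≤ K.sup id := Finset.le_sup (f := id) hn
  rw [triangleApply, Finset.mul_sum,
    ← Finset.sum_range_add_sum_Ico _ (by omega : n + 1 ≤ K.sup id + 1),
    Finset.sum_eq_zero (s := Finset.Ico _ _) fun k hk => ?_, add_zero]
  · exact Finset.sum_congr rfl fun k hk => by
      rw [dualMatrix, if_pos (Nat.lt_succ_iff.1 (Finset.mem_range.1 hk))]; ring
  · rw [dualMatrix, if_neg (by have := (Finset.mem_Ico.1 hk).1; omega), zero_mul]

theorem summable_mul_triangleApply_of_bdd {p q : ℝ} (hpq : p.HolderConjugate q) {C : ℝ}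
    (hC : ∀ K J : Finset ℕ, ∑ k ∈ J, |∑ n ∈ K, dualMatrix c a n k| ^ q ≤ C)
    {y : ℕ → ℝ} (hy : Summable fun k => |y k| ^ p) :
    Summable fun n => |a n * triangleApply c y n| := by
  refine summable_abs_of_abs_sum_le (M := C ^ (1 / q) * (∑' k, |y k| ^ p) ^ (1 / p)) fun K => ?_
  rw [sum_mul_triangleApply]
  refine (abs_sum_mul_le_Lp_mul_Lq _ _ _ hpq.symm).trans ?_
  have hp := hpq.pos
  have hq := hpq.symm.pos
  have hC0 : 0 ≤ C := by simpa using hC ∅ ∅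
  gcongr
  · exact hC K _
  · exact hy.sum_le_tsum _ fun k _ => by positivity

theorem bdd_of_summable_mul_triangleApply {p q : ℝ} (hpq : p.HolderConjugate q)
    (h : ∀ y : ℕ → ℝ, Summable (fun k => |y k| ^ p) →
      Summable fun n => |a n * triangleApply c y n|) :
    ∃ C, ∀ K J : Finset ℕ, ∑ k ∈ J, |∑ n ∈ K, dualMatrix c a n k| ^ q ≤ C := by
  set P := ENNReal.ofReal p
  have hP : P.toReal = p := ENNReal.toReal_ofReal hpq.nonneg
  have : Fact (1 ≤ P) := ⟨ENNReal.one_le_ofReal.2 hpq.lt.le⟩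
  let φ (K : Finset ℕ) : lp (fun _ : ℕ => ℝ) P →L[ℝ] ℝ :=
    ∑ k ∈ Finset.range (K.sup id + 1), (∑ n ∈ K, dualMatrix c a n k) • lp.evalCLM ℝ _ P k
  have hφ (K : Finset ℕ) (y : lp (fun _ : ℕ => ℝ) P) :
      φ K y = ∑ k ∈ Finset.range (K.sup id + 1), (∑ n ∈ K, dualMatrix c a n k) * y k := by
    simp only [φ, sum_apply, smul_apply, smul_eq_mul]
    rfl
  obtain ⟨C, hC⟩ : ∃ C, ∀ K, ‖φ K‖ ≤ C := by
    refine banach_steinhaus fun y => ?_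
    have hy := (memℓp_gen_iff (hP ▸ hpq.pos)).1 (lp.memℓp y)
    simp only [hP, Real.norm_eq_abs] at hy
    refine ⟨∑' n, |a n * triangleApply c y n|, fun K => ?_⟩
    rw [hφ, ← sum_mul_triangleApply, Real.norm_eq_abs]
    exact (Finset.abs_sum_le_sum_abs _ _).trans ((h _ hy).sum_le_tsum _ fun _ _ => abs_nonneg _)
  refine ⟨C ^ q, fun K J => ?_⟩
  calc ∑ k ∈ J, |∑ n ∈ K, dualMatrix c a n k| ^ q
      ≤ ∑ k ∈ Finset.range (K.sup id + 1), |∑ n ∈ K, dualMatrix c a n k| ^ q := by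
        rw [← Finset.sum_filter_of_ne (p := (· ∈ Finset.range (K.sup id + 1))) fun k _ hk => ?_]
        · exact Finset.sum_le_sum_of_subset_of_nonneg (fun k hk => (Finset.mem_filter.1 hk).2)
            fun _ _ _ => by positivity
        · contrapose! hk
          rw [sum_dualMatrix_eq_zero (by simpa using hk), abs_zero, Real.zero_rpow hpq.symm.ne_zero]
    _ ≤ ‖φ K‖ ^ q := sum_abs_rpow_le_opNorm_rpow (hP ▸ hpq) _ _ _ (hφ K)
    _ ≤ C ^ q := Real.rpow_le_rpow (norm_nonneg _) (hC K) hpq.symm.nonneg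

theorem summable_mul_triangleApply_iff {p q : ℝ} (hpq : p.HolderConjugate q) :
    (∀ y : ℕ → ℝ, Summable (fun k => |y k| ^ p) →
      Summable fun n => |a n * triangleApply c y n|) ↔
    ∃ C, ∀ K J : Finset ℕ, ∑ k ∈ J, |∑ n ∈ K, dualMatrix c a n k| ^ q ≤ C :=
  ⟨bdd_of_summable_mul_triangleApply hpq, fun ⟨_, hC⟩ _ => summable_mul_triangleApply_of_bdd hpq hC⟩

end Triangle

theorem fibs_pos (n : ℕ) : 0 < fibs n := by
  unfold fibs; exact_mod_cast Nat.fib_pos.2 n.succ_pos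

noncomputable def fhatInv (r s : ℝ) (n k : ℕ) : ℝ :=
  (1 / r) * (-s / r) ^ (n - k) * (fibs (n + 1) ^ 2 / (fibs k * fibs (k + 1)))

theorem fhatInv_self_ne_zero {r : ℝ} (s : ℝ) (hr : r ≠ 0) (n : ℕ) : fhatInv r s n n ≠ 0 := by
  simp [fhatInv, hr, (fibs_pos n).ne', (fibs_pos (n + 1)).ne']

theorem fhatInv_succ_left (r s : ℝ) {n k : ℕ} (hk : k ≤ n) :
    fhatInv r s (n + 1) k = -s / r * (fibs (n + 2) / fibs (n + 1)) ^ 2 * fhatInv r s n k := by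
  have := (fibs_pos (n + 1)).ne'
  rw [fhatInv, fhatInv, show n + 1 - k = n - k + 1 by omega, pow_succ]
  field_simp

theorem triangleApply_fhatInv_succ (r s : ℝ) (y : ℕ → ℝ) (n : ℕ) :
    triangleApply (fhatInv r s) y (n + 1) = fhatInv r s (n + 1) (n + 1) * y (n + 1) +
      -s / r * (fibs (n + 2) / fibs (n + 1)) ^ 2 * triangleApply (fhatInv r s) y n := by
  rw [triangleApply, Finset.sum_range_succ, add_comm, triangleApply, Finset.mul_sum]
  congr 1
  refine Finset.sum_congr rfl fun k hk => ?_
  rw [fhatInv_succ_left r s (Nat.lt_succ_iff.1 (Finset.mem_range.1 hk))]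
  ring

theorem Fhat_succ_eq_inv_mul {r : ℝ} (s : ℝ) (hr : r ≠ 0) (x : ℕ → ℝ) (n : ℕ) :
    Fhat r s x (n + 1) = (fhatInv r s (n + 1) (n + 1))⁻¹ *
      (x (n + 1) - -s / r * (fibs (n + 2) / fibs (n + 1)) ^ 2 * x n) := by
  have := (fibs_pos (n + 1)).ne'
  have := (fibs_pos (n + 2)).ne'
  simp only [Fhat, fhatInv, Nat.sub_self, pow_zero]
  field_simp
  ring

theorem Fhat_triangleApply_fhatInv {r : ℝ} (s : ℝ) (hr : r ≠ 0) (y : ℕ → ℝ) :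
    Fhat r s (triangleApply (fhatInv r s) y) = y := by
  funext n
  cases n with
  | zero => simp [Fhat, triangleApply, fhatInv, fibs]; field_simp
  | succ n =>
    rw [Fhat_succ_eq_inv_mul s hr, triangleApply_fhatInv_succ, add_sub_cancel_right,
      inv_mul_cancel_left₀ (fhatInv_self_ne_zero s hr _)]

theorem triangleApply_fhatInv_Fhat {r : ℝ} (s : ℝ) (hr : r ≠ 0) (x : ℕ → ℝ) :
    triangleApply (fhatInv r s) (Fhat r s x) = x := by
  funext n
  induction n with
  | zero => simp [Fhat, triangleApply, fhatInv, fibs]; field_simp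
  | succ n ih =>
    rw [triangleApply_fhatInv_succ, ih, Fhat_succ_eq_inv_mul s hr, mul_inv_cancel_left₀
      (fhatInv_self_ne_zero s hr _), sub_add_cancel]

theorem alpha_dual_general (r s : ℝ) (hr : r ≠ 0) (p q : ℝ) (hp : 1 < p)
    (hq : q = p / (p - 1)) (a : ℕ → ℝ) :
    (∀ x : ℕ → ℝ, Summable (fun k => |Fhat r s x k| ^ p) → Summable (fun n => |a n * x n|)) ↔
    ∃ C : ℝ, ∀ K J : Finset ℕ,
      ∑ k ∈ J, |∑ n ∈ K, (if k ≤ n then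
        (1 / r) * (-s / r) ^ (n - k) * (fibs (n + 1) ^ 2 / (fibs k * fibs (k + 1))) * a n
        else 0)| ^ q ≤ C := by
  have hpq : p.HolderConjugate q := hq ▸ Real.HolderConjugate.conjExponent hp
  refine Iff.trans ?_ (summable_mul_triangleApply_iff (c := fhatInv r s) (a := a) hpq)
  constructor
  · intro h y hy
    exact h _ (by rwa [Fhat_triangleApply_fhatInv s hr])
  · intro h x hx
    simpa only [triangleApply_fhatInv_Fhat s hr] using h _ hx

theorem alpha_dual (r s : ℝ) (hr : r ≠ 0) (hs : s ≠ 0) (p q : ℝ) (hp : 1 < p)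
    (hq : q = p / (p - 1)) (a : ℕ → ℝ) :
    (∀ x : ℕ → ℝ, Summable (fun k => |Fhat r s x k| ^ p) → Summable (fun n => |a n * x n|)) ↔
    ∃ C : ℝ, ∀ K J : Finset ℕ,
      ∑ k ∈ J, |∑ n ∈ K, (if k ≤ n then
        (1 / r) * (-s / r) ^ (n - k) * (fibs (n + 1) ^ 2 / (fibs k * fibs (k + 1))) * a n
        else 0)| ^ q ≤ C :=
  alpha_dual_general r s hr p q hp hq a
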